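/- arXiv:2502.01947 — 3 statements merged into one kernel-verified Lean document; each statement's English description precedes it below -/
import Mathlib

section
/- Let X₁, X₂, X̂₁, X̂₂ ∈ ℝ^{m×d} and suppose the d×d matrix X₁ᵀX₂ is invertible, with smallest singular value σ_min(X₁ᵀX₂) > 0. Let W ∈ O_d be a minimizer of O ↦ ‖X₁O − X₂‖_F over O_d, and let Ŵ ∈ O_d be any minimizer of O ↦ ‖X̂₁O − X̂₂‖_F over O_d. Then ‖Ŵ − W‖ ≤ 2‖X̂₁ᵀX̂₂ − X₁ᵀX₂‖ / σ_min(X₁ᵀX₂). -/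
open Matrix

/-- The spectral norm (ℓ₂→ℓ₂ operator norm) of a real matrix. -/
noncomputable def specNorm {m n : ℕ} (M : Matrix (Fin m) (Fin n) ℝ) : ℝ :=
  ‖LinearMap.toContinuousLinearMap (Matrix.toEuclideanLin M)‖

/-- The Frobenius norm of a real matrix. -/
noncomputable def frobNorm {m n : ℕ} (M : Matrix (Fin m) (Fin n) ℝ) : ℝ :=
  Real.sqrt (∑ i, ∑ j, (M i j) ^ 2)


open scoped Matrix.Norms.L2Operator RealInnerProductSpace

section SN
variable {k l d : ℕ}

lemma specNorm_eq (M : Matrix (Fin k) (Fin l) ℝ) : specNorm M = ‖M‖ := rfl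

noncomputable def eE {d : ℕ} (v : Fin d → ℝ) : EuclideanSpace ℝ (Fin d) :=
  (WithLp.equiv 2 (Fin d → ℝ)).symm v

lemma eE_apply (v : Fin d → ℝ) (i : Fin d) : eE v i = v i := rfl

lemma eE_smul (c : ℝ) (v : Fin d → ℝ) : eE (c • v) = c • eE v := rfl

lemma eE_surj (x : EuclideanSpace ℝ (Fin d)) : ∃ v, eE v = x := ⟨x, rfl⟩

lemma eE_inj {u v : Fin d → ℝ} (h : eE u = eE v) : u = v := (WithLp.equiv 2 (Fin d → ℝ)).symm.injective h

lemma clm_eE (M : Matrix (Fin k) (Fin d) ℝ) (v : Fin d → ℝ) :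
    LinearMap.toContinuousLinearMap (Matrix.toEuclideanLin M) (eE v) = eE (M *ᵥ v) := rfl

lemma norm_eE (v : Fin d → ℝ) : ‖eE v‖ = Real.sqrt (v ⬝ᵥ v) := by
  rw [EuclideanSpace.norm_eq]
  congr 1
  simp [eE, dotProduct, sq, Real.norm_eq_abs, abs_mul_abs_self]

lemma inner_eE (u v : Fin d → ℝ) : inner (𝕜 := ℝ) (eE u) (eE v) = u ⬝ᵥ v := by
  simp [eE, PiLp.inner_apply, RCLike.inner_apply, dotProduct, mul_comm]

lemma dot_self_nonneg (v : Fin d → ℝ) : 0 ≤ v ⬝ᵥ v :=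
  Finset.sum_nonneg fun i _ => mul_self_nonneg _

lemma dot_self_pos {v : Fin d → ℝ} (hv : v ≠ 0) : 0 < v ⬝ᵥ v := by
  rcases lt_or_eq_of_le (dot_self_nonneg v) with h | h
  · exact h
  · exact absurd (dotProduct_self_eq_zero.mp h.symm) hv

lemma dot_mulVec_left (M : Matrix (Fin k) (Fin d) ℝ) (u : Fin d → ℝ) (w : Fin k → ℝ) :
    (M *ᵥ u) ⬝ᵥ w = u ⬝ᵥ (Mᵀ *ᵥ w) := by
  rw [Matrix.dotProduct_mulVec, Matrix.vecMul_transpose, dotProduct_comm]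

lemma norm_mulVec_le (M : Matrix (Fin k) (Fin d) ℝ) (v : Fin d → ℝ) :
    Real.sqrt ((M *ᵥ v) ⬝ᵥ (M *ᵥ v)) ≤ ‖M‖ * Real.sqrt (v ⬝ᵥ v) := by
  rw [← norm_eE, ← norm_eE, ← clm_eE]
  exact (LinearMap.toContinuousLinearMap (Matrix.toEuclideanLin M)).le_opNorm _

lemma transpose_norm (M : Matrix (Fin k) (Fin l) ℝ) : ‖Mᵀ‖ = ‖M‖ := by
  have h : Mᵀ = Mᴴ := by ext i j; simp [conjTranspose_apply]
  rw [h, Matrix.l2_opNorm_conjTranspose]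

lemma orth_norm_le {U : Matrix (Fin d) (Fin d) ℝ} (hU : Uᵀ * U = 1) : ‖U‖ ≤ 1 := by
  rw [Matrix.l2_opNorm_def]
  refine ContinuousLinearMap.opNorm_le_bound _ zero_le_one fun x => ?_
  obtain ⟨v, rfl⟩ := eE_surj x
  have : (LinearEquiv.trans Matrix.toEuclideanLin LinearMap.toContinuousLinearMap U) (eE v)
      = eE (U *ᵥ v) := rfl
  rw [this, one_mul, norm_eE, norm_eE]
  have : (U *ᵥ v) ⬝ᵥ (U *ᵥ v) = v ⬝ᵥ v := by
    rw [dot_mulVec_left, Matrix.mulVec_mulVec, hU, Matrix.one_mulVec]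
  rw [this]


lemma trace_vecMulVec_mul (x y : Fin d → ℝ) (B : Matrix (Fin d) (Fin d) ℝ) :
    trace (vecMulVec x y * B) = y ⬝ᵥ (B *ᵥ x) := by
  simp only [trace, diag, mul_apply, vecMulVec_apply, dotProduct, mulVec]
  rw [Finset.sum_comm]
  exact Finset.sum_congr rfl fun j _ => by
    rw [Finset.mul_sum]
    exact Finset.sum_congr rfl fun i _ => by ring

lemma vecMulVec_mul_vecMulVec (a b c e : Fin d → ℝ) :
    vecMulVec a b * vecMulVec c e = (b ⬝ᵥ c) • vecMulVec a e := by
  ext i j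
  simp only [mul_apply, vecMulVec_apply, Matrix.smul_apply, smul_eq_mul, dotProduct]
  rw [Finset.sum_mul]
  exact Finset.sum_congr rfl fun x _ => by ring

noncomputable def hh {d : ℕ} (v : Fin d → ℝ) : Matrix (Fin d) (Fin d) ℝ :=
  1 - (2 / (v ⬝ᵥ v)) • vecMulVec v v

lemma hh_symm (v : Fin d → ℝ) : (hh v)ᵀ = hh v := by
  unfold hh
  rw [transpose_sub, transpose_smul, transpose_one]
  congr 1
  ext i j
  simp [vecMulVec_apply, mul_comm]

lemma hh_mul_self {v : Fin d → ℝ} (hv : v ≠ 0) : hh v * hh v = 1 := by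
  have hvv : v ⬝ᵥ v ≠ 0 := (dot_self_pos hv).ne'
  unfold hh
  simp only [Matrix.sub_mul, Matrix.mul_sub, Matrix.one_mul, Matrix.mul_one,
    Matrix.smul_mul, Matrix.mul_smul, vecMulVec_mul_vecMulVec, smul_smul]
  rw [smul_sub, smul_smul]
  have h2 : 2 / (v ⬝ᵥ v) * (2 / (v ⬝ᵥ v) * (v ⬝ᵥ v)) = 2 / (v ⬝ᵥ v) + 2 / (v ⬝ᵥ v) := by
    field_simp; norm_num
  rw [h2, add_smul]
  abel

lemma hh_orth {v : Fin d → ℝ} (hv : v ≠ 0) : (hh v)ᵀ * hh v = 1 := by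
  rw [hh_symm]; exact hh_mul_self hv
end SN
section S3
variable {d : ℕ}

lemma linear_coeff_zero {a b : ℝ} (h : ∀ t : ℝ, 0 ≤ a * t ^ 2 + b * t) : b = 0 := by
  by_contra hb
  have hd : (0:ℝ) < |a| + 1 := by positivity
  have h1 := h (-b / (|a| + 1))
  have hb2 : 0 < b ^ 2 := by positivity
  have ha : a < |a| + 1 := by nlinarith [le_abs_self a]
  have expand : a * (-b / (|a| + 1)) ^ 2 + b * (-b / (|a| + 1))
      = (b ^ 2 / (|a| + 1)) * ((a - (|a| + 1)) / (|a| + 1)) := by field_simp; ring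
  rw [expand] at h1
  have hneg : (b ^ 2 / (|a| + 1)) * ((a - (|a| + 1)) / (|a| + 1)) < 0 :=
    mul_neg_of_pos_of_neg (by positivity) (div_neg_of_neg_of_pos (by linarith) hd)
  linarith

lemma psd_of_trace_max {B : Matrix (Fin d) (Fin d) ℝ}
    (htr : ∀ U : Matrix (Fin d) (Fin d) ℝ, Uᵀ * U = 1 → trace (Uᵀ * B) ≤ trace B) :
    (∀ v : Fin d → ℝ, 0 ≤ v ⬝ᵥ (B *ᵥ v)) ∧ Bᵀ = B := by
  have hpsd : ∀ v : Fin d → ℝ, 0 ≤ v ⬝ᵥ (B *ᵥ v) := by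
    intro v
    rcases eq_or_ne v 0 with rfl | hv
    · simp
    have h := htr (hh v) (hh_orth hv)
    rw [hh_symm] at h
    unfold hh at h
    rw [Matrix.sub_mul, Matrix.one_mul, Matrix.smul_mul, trace_sub, trace_smul,
      trace_vecMulVec_mul, smul_eq_mul] at h
    have hc : 0 < 2 / (v ⬝ᵥ v) := div_pos two_pos (dot_self_pos hv)
    by_contra hq
    push_neg at hq
    nlinarith [mul_neg_of_pos_of_neg hc hq]
  have hkey : ∀ u v : Fin d → ℝ, 2 * (u ⬝ᵥ v) * (u ⬝ᵥ (B *ᵥ v)) ≤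
      (v ⬝ᵥ v) * (u ⬝ᵥ (B *ᵥ u)) + (u ⬝ᵥ u) * (v ⬝ᵥ (B *ᵥ v)) := by
    intro u v
    rcases eq_or_ne u 0 with rfl | hu
    · simp
    rcases eq_or_ne v 0 with rfl | hv
    · simp
    have hU : (hh u * hh v)ᵀ * (hh u * hh v) = 1 := by
      rw [transpose_mul, hh_symm, hh_symm, Matrix.mul_assoc, ← Matrix.mul_assoc (hh u),
        hh_mul_self hu, Matrix.one_mul, hh_mul_self hv]
    have h := htr (hh u * hh v) hU
    rw [transpose_mul, hh_symm, hh_symm] at h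
    have hprod : hh v * hh u = 1 - (2 / (u ⬝ᵥ u)) • vecMulVec u u
        - (2 / (v ⬝ᵥ v)) • vecMulVec v v
        + ((2 / (v ⬝ᵥ v)) * ((2 / (u ⬝ᵥ u)) * (v ⬝ᵥ u))) • vecMulVec v u := by
      unfold hh
      simp only [Matrix.sub_mul, Matrix.mul_sub, Matrix.one_mul, Matrix.mul_one,
        Matrix.smul_mul, Matrix.mul_smul, vecMulVec_mul_vecMulVec, smul_smul]
      module
    rw [hprod, Matrix.add_mul, Matrix.sub_mul, Matrix.sub_mul, Matrix.one_mul,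
      Matrix.smul_mul, Matrix.smul_mul, Matrix.smul_mul, trace_add, trace_sub, trace_sub,
      trace_smul, trace_smul, trace_smul, trace_vecMulVec_mul, trace_vecMulVec_mul,
      trace_vecMulVec_mul, smul_eq_mul, smul_eq_mul, smul_eq_mul] at h
    have hdu := dot_self_pos hu
    have hdv := dot_self_pos hv
    have key : 0 ≤ 2 / (u ⬝ᵥ u) * (u ⬝ᵥ (B *ᵥ u)) + 2 / (v ⬝ᵥ v) * (v ⬝ᵥ (B *ᵥ v))
        - 2 / (v ⬝ᵥ v) * (2 / (u ⬝ᵥ u) * (v ⬝ᵥ u)) * (u ⬝ᵥ (B *ᵥ v)) := by linarith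
    have key2 := mul_nonneg (mul_nonneg hdu.le hdv.le) key
    have e1 : (u ⬝ᵥ u) * (v ⬝ᵥ v) * (2 / (u ⬝ᵥ u) * (u ⬝ᵥ (B *ᵥ u)) + 2 / (v ⬝ᵥ v) * (v ⬝ᵥ (B *ᵥ v))
        - 2 / (v ⬝ᵥ v) * (2 / (u ⬝ᵥ u) * (v ⬝ᵥ u)) * (u ⬝ᵥ (B *ᵥ v)))
        = 2 * ((v ⬝ᵥ v) * (u ⬝ᵥ (B *ᵥ u)) + (u ⬝ᵥ u) * (v ⬝ᵥ (B *ᵥ v))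
            - 2 * (v ⬝ᵥ u) * (u ⬝ᵥ (B *ᵥ v))) := by
      field_simp
    rw [e1] at key2
    have hvu : v ⬝ᵥ u = u ⬝ᵥ v := dotProduct_comm v u
    rw [hvu] at key2
    linarith
  have hsym' : ∀ u w : Fin d → ℝ, u ≠ 0 → u ⬝ᵥ (B *ᵥ w) = w ⬝ᵥ (B *ᵥ u) := by
    intro u w hu
    have hpoly : ∀ t : ℝ, 0 ≤
        ((w ⬝ᵥ w) * (u ⬝ᵥ (B *ᵥ u)) + (u ⬝ᵥ u) * (w ⬝ᵥ (B *ᵥ w))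
          - 2 * (u ⬝ᵥ w) * (u ⬝ᵥ (B *ᵥ w))) * t ^ 2
        + ((u ⬝ᵥ u) * ((w ⬝ᵥ (B *ᵥ u)) - (u ⬝ᵥ (B *ᵥ w)))) * t := by
      intro t
      have h := hkey u (u + t • w)
      simp only [Matrix.mulVec_add, Matrix.mulVec_smul, dotProduct_add,
        add_dotProduct, smul_dotProduct, dotProduct_smul,
        smul_eq_mul] at h
      rw [dotProduct_comm w u] at h
      nlinarith [h]
    have hz := linear_coeff_zero hpoly
    have huu := dot_self_pos hu
    have : (w ⬝ᵥ (B *ᵥ u)) - (u ⬝ᵥ (B *ᵥ w)) = 0 := by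
      rcases mul_eq_zero.mp hz with h0 | h0
      · exact absurd h0 huu.ne'
      · exact h0
    linarith
  refine ⟨hpsd, ?_⟩
  ext i j
  have hu : (Pi.single i 1 : Fin d → ℝ) ≠ 0 := by
    intro h
    have := congrFun h i
    simp at this
  have hz := hsym' (Pi.single i 1) (Pi.single j 1) hu
  have hq : ∀ a b : Fin d, (Pi.single a (1:ℝ)) ⬝ᵥ (B *ᵥ Pi.single b 1) = B a b := by
    intro a b
    simp [single_dotProduct, Matrix.mulVec_single]
  rw [hq, hq] at hz
  rw [transpose_apply]
  exact hz.symm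
end S3
section S4
variable {d : ℕ}

lemma frob_sq {k l : ℕ} (M : Matrix (Fin k) (Fin l) ℝ) : frobNorm M ^ 2 = trace (Mᵀ * M) := by
  unfold frobNorm
  rw [Real.sq_sqrt (by positivity)]
  simp only [trace, diag, mul_apply, transpose_apply]
  rw [Finset.sum_comm]
  exact Finset.sum_congr rfl fun j _ => Finset.sum_congr rfl fun i _ => pow_two (M i j)

lemma trace_expand {m : ℕ} (X1 X2 : Matrix (Fin m) (Fin d) ℝ) (O : Matrix (Fin d) (Fin d) ℝ)
    (hO : Oᵀ * O = 1) :
    trace ((X1 * O - X2)ᵀ * (X1 * O - X2))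
      = trace (X1ᵀ * X1) + trace (X2ᵀ * X2) - 2 * trace (Oᵀ * (X1ᵀ * X2)) := by
  have hOO : O * Oᵀ = 1 := mul_eq_one_comm.mp hO
  rw [transpose_sub, transpose_mul, Matrix.sub_mul, Matrix.mul_sub, Matrix.mul_sub,
    trace_sub, trace_sub, trace_sub]
  have h1 : trace ((Oᵀ * X1ᵀ) * (X1 * O)) = trace (X1ᵀ * X1) := by
    rw [trace_mul_comm, Matrix.mul_assoc, ← Matrix.mul_assoc O Oᵀ X1ᵀ, hOO, Matrix.one_mul,
      trace_mul_comm]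
  have h2 : trace ((Oᵀ * X1ᵀ) * X2) = trace (Oᵀ * (X1ᵀ * X2)) := by
    rw [Matrix.mul_assoc]
  have h3 : trace (X2ᵀ * (X1 * O)) = trace (Oᵀ * (X1ᵀ * X2)) := by
    rw [← trace_transpose (X2ᵀ * (X1 * O)), transpose_mul, transpose_mul, transpose_transpose,
      Matrix.mul_assoc]
  rw [h1, h2, h3]
  ring

lemma trace_max_of_min {m : ℕ} (X1 X2 : Matrix (Fin m) (Fin d) ℝ)
    (W : Matrix (Fin d) (Fin d) ℝ) (hW : Wᵀ * W = 1)
    (hmin : ∀ O : Matrix (Fin d) (Fin d) ℝ, Oᵀ * O = 1 →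
      frobNorm (X1 * W - X2) ≤ frobNorm (X1 * O - X2)) :
    ∀ U : Matrix (Fin d) (Fin d) ℝ, Uᵀ * U = 1 →
      trace (Uᵀ * (Wᵀ * (X1ᵀ * X2))) ≤ trace (Wᵀ * (X1ᵀ * X2)) := by
  intro U hU
  have hO : (W * U)ᵀ * (W * U) = 1 := by
    rw [transpose_mul, Matrix.mul_assoc, ← Matrix.mul_assoc Wᵀ W U, hW, Matrix.one_mul, hU]
  have h := hmin (W * U) hO
  have h2 : trace ((X1 * W - X2)ᵀ * (X1 * W - X2))
      ≤ trace ((X1 * (W * U) - X2)ᵀ * (X1 * (W * U) - X2)) := by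
    rw [← frob_sq, ← frob_sq]
    exact pow_le_pow_left₀ (Real.sqrt_nonneg _) h 2
  rw [trace_expand X1 X2 W hW, trace_expand X1 X2 (W * U) hO] at h2
  have h3 : (W * U)ᵀ * (X1ᵀ * X2) = Uᵀ * (Wᵀ * (X1ᵀ * X2)) := by
    rw [transpose_mul, Matrix.mul_assoc]
  rw [h3] at h2
  linarith
end S4
section S5
variable {d : ℕ}

lemma matrix_isSymmetric {M : Matrix (Fin d) (Fin d) ℝ} (hsym : Mᵀ = M) :
    IsSelfAdjoint (LinearMap.toContinuousLinearMap (Matrix.toEuclideanLin M)) := by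
  rw [ContinuousLinearMap.isSelfAdjoint_iff_isSymmetric]
  intro x y
  obtain ⟨a, rfl⟩ := eE_surj x
  obtain ⟨b, rfl⟩ := eE_surj y
  show inner (𝕜 := ℝ) (LinearMap.toContinuousLinearMap (Matrix.toEuclideanLin M) (eE a)) (eE b)
    = inner (𝕜 := ℝ) (eE a) (LinearMap.toContinuousLinearMap (Matrix.toEuclideanLin M) (eE b))
  rw [clm_eE, clm_eE, inner_eE, inner_eE, dot_mulVec_left, hsym]

lemma reApply_eq (M : Matrix (Fin d) (Fin d) ℝ) (v : Fin d → ℝ) :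
    (LinearMap.toContinuousLinearMap (Matrix.toEuclideanLin M)).reApplyInnerSelf (eE v)
      = (M *ᵥ v) ⬝ᵥ v := by
  rw [ContinuousLinearMap.reApplyInnerSelf, clm_eE, inner_eE]
  exact RCLike.re_to_real

lemma exists_max_rayleigh (hd : 0 < d) (M : Matrix (Fin d) (Fin d) ℝ) (hsym : Mᵀ = M) :
    ∃ v : Fin d → ℝ, v ⬝ᵥ v = 1 ∧ M *ᵥ v = ((M *ᵥ v) ⬝ᵥ v) • v ∧
      ∀ w : Fin d → ℝ, w ⬝ᵥ w = 1 → (M *ᵥ w) ⬝ᵥ w ≤ (M *ᵥ v) ⬝ᵥ v := by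
  set T := LinearMap.toContinuousLinearMap (Matrix.toEuclideanLin M) with hT
  have hsa := matrix_isSymmetric hsym
  have hcomp : IsCompact (Metric.sphere (0 : EuclideanSpace ℝ (Fin d)) 1) :=
    isCompact_sphere _ _
  have hne : (Metric.sphere (0 : EuclideanSpace ℝ (Fin d)) 1).Nonempty := by
    refine ⟨eE (Pi.single ⟨0, hd⟩ 1), ?_⟩
    rw [mem_sphere_zero_iff_norm, norm_eE, single_dotProduct]
    simp
  obtain ⟨x₀, hx₀S, hmax⟩ := hcomp.exists_isMaxOn hne T.reApplyInnerSelf_continuous.continuousOn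
  have hx₀n : ‖x₀‖ = 1 := mem_sphere_zero_iff_norm.mp hx₀S
  have hx₀ : x₀ ≠ 0 := by
    intro h
    rw [h, norm_zero] at hx₀n
    exact zero_ne_one hx₀n
  have hloc : IsLocalExtrOn T.reApplyInnerSelf (Metric.sphere (0 : EuclideanSpace ℝ (Fin d)) ‖x₀‖) x₀ := by
    rw [hx₀n]
    exact Or.inr hmax.localize
  have heig := hsa.eq_smul_self_of_isLocalExtrOn hloc
  obtain ⟨v, rfl⟩ := eE_surj x₀
  have hv1 : v ⬝ᵥ v = 1 := by
    rw [norm_eE] at hx₀n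
    exact Real.sqrt_eq_one.mp hx₀n
  have hray : T.rayleighQuotient (eE v) = (M *ᵥ v) ⬝ᵥ v := by
    rw [ContinuousLinearMap.rayleighQuotient, reApply_eq, hx₀n]
    norm_num
  rw [hray, clm_eE] at heig
  refine ⟨v, hv1, ?_, ?_⟩
  · have : eE (M *ᵥ v) = eE (((M *ᵥ v) ⬝ᵥ v) • v) := by rw [eE_smul]; exact heig
    exact eE_inj this
  · intro w hw
    have hwS : eE w ∈ Metric.sphere (0 : EuclideanSpace ℝ (Fin d)) 1 := by
      rw [mem_sphere_zero_iff_norm, norm_eE, hw, Real.sqrt_one]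
    have h2 : T.reApplyInnerSelf (eE w) ≤ T.reApplyInnerSelf (eE v) := hmax hwS
    rw [hT, reApply_eq, reApply_eq] at h2
    exact h2

lemma exists_min_rayleigh (hd : 0 < d) (M : Matrix (Fin d) (Fin d) ℝ) (hsym : Mᵀ = M) :
    ∃ v : Fin d → ℝ, v ⬝ᵥ v = 1 ∧ M *ᵥ v = ((M *ᵥ v) ⬝ᵥ v) • v ∧
      ∀ w : Fin d → ℝ, w ⬝ᵥ w = 1 → (M *ᵥ v) ⬝ᵥ v ≤ (M *ᵥ w) ⬝ᵥ w := by
  have hsym' : (-M)ᵀ = -M := by rw [transpose_neg, hsym]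
  obtain ⟨v, hv1, heig, hmax⟩ := exists_max_rayleigh hd (-M) hsym'
  rw [Matrix.neg_mulVec] at heig hmax
  refine ⟨v, hv1, ?_, ?_⟩
  · rw [neg_dotProduct, neg_smul] at heig
    exact neg_inj.mp heig
  · intro w hw
    have := hmax w hw
    rw [Matrix.neg_mulVec, neg_dotProduct, neg_dotProduct] at this
    linarith
end S5
section S6
open scoped Matrix.Norms.L2Operator
variable {d : ℕ}

lemma dot_inv_smul {v : Fin d → ℝ} (hv : v ≠ 0) (X : ℝ) :
    (Real.sqrt (v ⬝ᵥ v))⁻¹ * ((Real.sqrt (v ⬝ᵥ v))⁻¹ * X) = X / (v ⬝ᵥ v) := by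
  have hn : 0 < v ⬝ᵥ v := dot_self_pos hv
  rw [← mul_assoc, ← mul_inv, Real.mul_self_sqrt hn.le, div_eq_inv_mul]

lemma unit_scale {v : Fin d → ℝ} (hv : v ≠ 0) :
    ((Real.sqrt (v ⬝ᵥ v))⁻¹ • v) ⬝ᵥ ((Real.sqrt (v ⬝ᵥ v))⁻¹ • v) = 1 := by
  have hn : 0 < v ⬝ᵥ v := dot_self_pos hv
  rw [smul_dotProduct, dotProduct_smul, smul_eq_mul, smul_eq_mul,
    ← mul_assoc, ← mul_inv, Real.mul_self_sqrt hn.le, inv_mul_cancel₀ hn.ne']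

lemma sigma_lower {P A : Matrix (Fin d) (Fin d) ℝ} {σ : ℝ} (hσ : 0 < σ)
    (hsym : Pᵀ = P) (hpsd : ∀ v : Fin d → ℝ, 0 ≤ v ⬝ᵥ (P *ᵥ v))
    (hPA : Pᵀ * P = Aᵀ * A)
    (hA : ∀ v : Fin d → ℝ, σ * Real.sqrt (v ⬝ᵥ v) ≤ Real.sqrt ((A *ᵥ v) ⬝ᵥ (A *ᵥ v))) :
    ∀ v : Fin d → ℝ, σ * (v ⬝ᵥ v) ≤ v ⬝ᵥ (P *ᵥ v) := by
  rcases Nat.eq_zero_or_pos d with rfl | hd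
  · intro v
    have hv : v = 0 := funext fun i => i.elim0
    subst hv
    simp
  obtain ⟨v₀, hv₀1, heig, hmin⟩ := exists_min_rayleigh hd P hsym
  set μ := (P *ᵥ v₀) ⬝ᵥ v₀ with hμ
  have hμ0 : 0 ≤ μ := by
    rw [hμ, dotProduct_comm]
    exact hpsd v₀
  have hPv : (P *ᵥ v₀) ⬝ᵥ (P *ᵥ v₀) = (A *ᵥ v₀) ⬝ᵥ (A *ᵥ v₀) := by
    rw [dot_mulVec_left, Matrix.mulVec_mulVec, hPA, ← Matrix.mulVec_mulVec,
      ← dot_mulVec_left]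
  have hPv2 : (P *ᵥ v₀) ⬝ᵥ (P *ᵥ v₀) = μ ^ 2 := by
    rw [heig, smul_dotProduct, dotProduct_smul, smul_eq_mul, smul_eq_mul, hv₀1]
    ring
  have hσμ : σ ≤ μ := by
    have h := hA v₀
    rw [hv₀1, Real.sqrt_one, mul_one, ← hPv, hPv2] at h
    rwa [Real.sqrt_sq hμ0] at h
  intro v
  rcases eq_or_ne v 0 with rfl | hv
  · simp
  have hn : 0 < v ⬝ᵥ v := dot_self_pos hv
  have h := hmin _ (unit_scale hv)
  rw [Matrix.mulVec_smul, smul_dotProduct, dotProduct_smul,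
    smul_eq_mul, smul_eq_mul, dot_inv_smul hv] at h
  have h2 : μ * (v ⬝ᵥ v) ≤ (P *ᵥ v) ⬝ᵥ v := (le_div_iff₀ hn).mp h
  rw [dotProduct_comm v (P *ᵥ v)]
  calc σ * (v ⬝ᵥ v) ≤ μ * (v ⬝ᵥ v) := mul_le_mul_of_nonneg_right hσμ hn.le
    _ ≤ (P *ᵥ v) ⬝ᵥ v := h2

lemma qid (Y : Matrix (Fin d) (Fin d) ℝ) (w : Fin d → ℝ) :
    ((Yᵀ * Y) *ᵥ w) ⬝ᵥ w = (Y *ᵥ w) ⬝ᵥ (Y *ᵥ w) := by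
  rw [dot_mulVec_left Y w (Y *ᵥ w), ← Matrix.mulVec_mulVec, dotProduct_comm]

lemma exists_top_singular (hd : 0 < d) (Y : Matrix (Fin d) (Fin d) ℝ) :
    ∃ v : Fin d → ℝ, v ⬝ᵥ v = 1 ∧ Yᵀ *ᵥ (Y *ᵥ v) = (‖Y‖ ^ 2) • v ∧
      Real.sqrt ((Y *ᵥ v) ⬝ᵥ (Y *ᵥ v)) = ‖Y‖ := by
  have hsym : (Yᵀ * Y)ᵀ = Yᵀ * Y := by
    rw [transpose_mul, transpose_transpose]
  obtain ⟨v, hv1, heig, hmax⟩ := exists_max_rayleigh hd (Yᵀ * Y) hsym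
  set μ := ((Yᵀ * Y) *ᵥ v) ⬝ᵥ v with hμdef
  have hμq : μ = (Y *ᵥ v) ⬝ᵥ (Y *ᵥ v) := qid Y v
  have hμ0 : 0 ≤ μ := hμq ▸ dot_self_nonneg _
  have hle : Real.sqrt μ ≤ ‖Y‖ := by
    have h := norm_mulVec_le Y v
    rw [hv1, Real.sqrt_one, mul_one] at h
    rw [hμq]
    exact h
  have hq_le : ∀ w : Fin d → ℝ, (Y *ᵥ w) ⬝ᵥ (Y *ᵥ w) ≤ (w ⬝ᵥ w) * μ := by
    intro w
    rcases eq_or_ne w 0 with rfl | hw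
    · simp
    have hn : 0 < w ⬝ᵥ w := dot_self_pos hw
    have h := hmax _ (unit_scale hw)
    rw [qid, Matrix.mulVec_smul, smul_dotProduct, dotProduct_smul,
      smul_eq_mul, smul_eq_mul, dot_inv_smul hw] at h
    rw [mul_comm]
    exact (div_le_iff₀ hn).mp h
  have hge : ‖Y‖ ≤ Real.sqrt μ := by
    rw [Matrix.l2_opNorm_def]
    refine ContinuousLinearMap.opNorm_le_bound _ (Real.sqrt_nonneg _) fun x => ?_
    obtain ⟨w, rfl⟩ := eE_surj x
    have hcl : (LinearEquiv.trans Matrix.toEuclideanLin LinearMap.toContinuousLinearMap Y) (eE w)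
        = eE (Y *ᵥ w) := rfl
    rw [hcl, norm_eE, norm_eE, mul_comm, ← Real.sqrt_mul (dot_self_nonneg w)]
    exact Real.sqrt_le_sqrt (hq_le w)
  have hnorm : ‖Y‖ = Real.sqrt μ := le_antisymm hge hle
  refine ⟨v, hv1, ?_, ?_⟩
  · rw [Matrix.mulVec_mulVec, heig, hnorm, Real.sq_sqrt hμ0]
  · rw [← hμq, hnorm]
end S6
section S7
open scoped Matrix.Norms.L2Operator
variable {d : ℕ}

lemma dot_le_norm (M : Matrix (Fin d) (Fin d) ℝ) (u v : Fin d → ℝ)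
    (hu : u ⬝ᵥ u = 1) (hv : v ⬝ᵥ v = 1) : u ⬝ᵥ (M *ᵥ v) ≤ ‖M‖ := by
  have h := real_inner_le_norm (eE u) (eE (M *ᵥ v))
  rw [inner_eE, norm_eE, norm_eE, hu, Real.sqrt_one, one_mul] at h
  calc u ⬝ᵥ (M *ᵥ v) ≤ Real.sqrt ((M *ᵥ v) ⬝ᵥ (M *ᵥ v)) := h
    _ ≤ ‖M‖ * Real.sqrt (v ⬝ᵥ v) := norm_mulVec_le M v
    _ = ‖M‖ := by rw [hv, Real.sqrt_one, mul_one]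

theorem stmt_9' {m d : ℕ} (X1 X2 Xh1 Xh2 : Matrix (Fin m) (Fin d) ℝ)
    (hinv : IsUnit (X1ᵀ * X2))
    (σ : ℝ) (hσ : 0 < σ)
    (hσmin : ∀ v : Fin d → ℝ,
      σ * Real.sqrt (v ⬝ᵥ v) ≤ Real.sqrt (((X1ᵀ * X2) *ᵥ v) ⬝ᵥ ((X1ᵀ * X2) *ᵥ v)))
    (W : Matrix (Fin d) (Fin d) ℝ) (hWorth : Wᵀ * W = 1)
    (hWmin : ∀ O : Matrix (Fin d) (Fin d) ℝ, Oᵀ * O = 1 →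
      frobNorm (X1 * W - X2) ≤ frobNorm (X1 * O - X2))
    (What : Matrix (Fin d) (Fin d) ℝ) (hWhatorth : Whatᵀ * What = 1)
    (hWhatmin : ∀ O : Matrix (Fin d) (Fin d) ℝ, Oᵀ * O = 1 →
      frobNorm (Xh1 * What - Xh2) ≤ frobNorm (Xh1 * O - Xh2)) :
    specNorm (What - W) ≤ 2 * specNorm (Xh1ᵀ * Xh2 - X1ᵀ * X2) / σ := by
  rw [specNorm_eq, specNorm_eq]
  have hRHS0 : 0 ≤ 2 * ‖Xh1ᵀ * Xh2 - X1ᵀ * X2‖ / σ := by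
    apply div_nonneg _ hσ.le
    have := norm_nonneg (Xh1ᵀ * Xh2 - X1ᵀ * X2)
    linarith
  rcases Nat.eq_zero_or_pos d with rfl | hd
  · have h0 : What - W = 0 := Subsingleton.elim _ _
    rw [h0, norm_zero]
    exact hRHS0
  have hWWT : W * Wᵀ = 1 := mul_eq_one_comm.mp hWorth
  have hWhWhT : What * Whatᵀ = 1 := mul_eq_one_comm.mp hWhatorth
  obtain ⟨hPpsd, hPsym⟩ := psd_of_trace_max (trace_max_of_min X1 X2 W hWorth hWmin)
  obtain ⟨hPhpsd, hPhsym⟩ := psd_of_trace_max (trace_max_of_min Xh1 Xh2 What hWhatorth hWhatmin)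
  set A := X1ᵀ * X2 with hAdef
  set Ah := Xh1ᵀ * Xh2 with hAhdef
  set P := Wᵀ * A with hPdef
  set Ph := Whatᵀ * Ah with hPhdef
  set Q := Whatᵀ * W with hQdef
  set Y := (1 : Matrix (Fin d) (Fin d) ℝ) - Q with hYdef
  set E := Ah - A with hEdef
  have hPA : Pᵀ * P = Aᵀ * A := by
    rw [hPdef, transpose_mul, transpose_transpose, Matrix.mul_assoc,
      ← Matrix.mul_assoc W Wᵀ A, hWWT, Matrix.one_mul]
  have hPlow := sigma_lower hσ hPsym hPpsd hPA hσmin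
  have hWhY : What * Y = What - W := by
    rw [hYdef, Matrix.mul_sub, Matrix.mul_one, hQdef, ← Matrix.mul_assoc, hWhWhT,
      Matrix.one_mul]
  have hF : Whatᵀ * E - Eᵀ * W = Ph * Y + Y * P := by
    have h1 : Whatᵀ * A = Q * P := by
      rw [hQdef, hPdef, Matrix.mul_assoc, ← Matrix.mul_assoc W Wᵀ A, hWWT, Matrix.one_mul]
    have h2 : Ahᵀ * W = Ph * Q := by
      have : Ph * Q = Phᵀ * Q := by rw [hPhsym]
      rw [this, hPhdef, transpose_mul Whatᵀ Ah, transpose_transpose, hQdef,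
        Matrix.mul_assoc, ← Matrix.mul_assoc What Whatᵀ W, hWhWhT, Matrix.one_mul]
    have h3 : Aᵀ * W = P := by
      rw [← hPsym, hPdef, transpose_mul Wᵀ A, transpose_transpose]
    rw [hEdef, Matrix.mul_sub, transpose_sub, Matrix.sub_mul, h1, h2, h3, hYdef]
    noncomm_ring
  have hFnorm : ‖Ph * Y + Y * P‖ ≤ 2 * ‖E‖ := by
    rw [← hF]
    calc ‖Whatᵀ * E - Eᵀ * W‖ ≤ ‖Whatᵀ * E‖ + ‖Eᵀ * W‖ := norm_sub_le _ _
      _ ≤ ‖Whatᵀ‖ * ‖E‖ + ‖Eᵀ‖ * ‖W‖ :=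
          add_le_add (Matrix.l2_opNorm_mul _ _) (Matrix.l2_opNorm_mul _ _)
      _ ≤ 1 * ‖E‖ + ‖E‖ * 1 := by
          have ht1 : ‖Whatᵀ‖ ≤ 1 := orth_norm_le (by rw [transpose_transpose]; exact hWhWhT)
          have ht2 : ‖W‖ ≤ 1 := orth_norm_le hWorth
          have ht3 : ‖Eᵀ‖ = ‖E‖ := transpose_norm E
          have h4 := norm_nonneg E
          have h5 := norm_nonneg (Eᵀ)
          nlinarith
      _ = 2 * ‖E‖ := by ring
  rcases eq_or_ne Y 0 with hY0 | hYne
  · rw [← hWhY, hY0, Matrix.mul_zero, norm_zero]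
    exact hRHS0
  have hYnn : ‖Y‖ ≠ 0 := norm_ne_zero_iff.mpr hYne
  have hYpos : 0 < ‖Y‖ := lt_of_le_of_ne (norm_nonneg Y) (Ne.symm hYnn)
  obtain ⟨v, hv1, heigY, hsv⟩ := exists_top_singular hd Y
  set u := (‖Y‖)⁻¹ • (Y *ᵥ v) with hudef
  have hYv : Y *ᵥ v = ‖Y‖ • u := by
    rw [hudef, smul_smul, mul_inv_cancel₀ hYnn, one_smul]
  have hYvdot : (Y *ᵥ v) ⬝ᵥ (Y *ᵥ v) = ‖Y‖ ^ 2 := by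
    rw [← Real.sq_sqrt (dot_self_nonneg (Y *ᵥ v)), hsv]
  have hYTu : Yᵀ *ᵥ u = ‖Y‖ • v := by
    rw [hudef, Matrix.mulVec_smul, heigY, smul_smul]
    congr 1
    rw [pow_two, ← mul_assoc, inv_mul_cancel₀ hYnn, one_mul]
  have huu : u ⬝ᵥ u = 1 := by
    rw [hudef, smul_dotProduct, dotProduct_smul, smul_eq_mul, smul_eq_mul,
      hYvdot]
    field_simp
  have hestim : σ * ‖Y‖ ≤ u ⬝ᵥ ((Ph * Y + Y * P) *ᵥ v) := by
    have hsplit : (Ph * Y + Y * P) *ᵥ v = Ph *ᵥ (Y *ᵥ v) + Y *ᵥ (P *ᵥ v) := by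
      rw [Matrix.add_mulVec, Matrix.mulVec_mulVec, Matrix.mulVec_mulVec]
    have e1 : u ⬝ᵥ (Ph *ᵥ (Y *ᵥ v)) = ‖Y‖ * (u ⬝ᵥ (Ph *ᵥ u)) := by
      rw [hYv, Matrix.mulVec_smul, dotProduct_smul, smul_eq_mul]
    have e2 : u ⬝ᵥ (Y *ᵥ (P *ᵥ v)) = ‖Y‖ * (v ⬝ᵥ (P *ᵥ v)) := by
      calc u ⬝ᵥ (Y *ᵥ (P *ᵥ v)) = (Y *ᵥ (P *ᵥ v)) ⬝ᵥ u :=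
            dotProduct_comm u (Y *ᵥ (P *ᵥ v))
        _ = (P *ᵥ v) ⬝ᵥ (Yᵀ *ᵥ u) := dot_mulVec_left Y (P *ᵥ v) u
        _ = (P *ᵥ v) ⬝ᵥ (‖Y‖ • v) := by rw [hYTu]
        _ = ‖Y‖ * ((P *ᵥ v) ⬝ᵥ v) := by rw [dotProduct_smul, smul_eq_mul]
        _ = ‖Y‖ * (v ⬝ᵥ (P *ᵥ v)) := by rw [dotProduct_comm (P *ᵥ v) v]
    rw [hsplit, dotProduct_add, e1, e2]
    have hp1 : 0 ≤ u ⬝ᵥ (Ph *ᵥ u) := hPhpsd u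
    have hp2 : σ * (v ⬝ᵥ v) ≤ v ⬝ᵥ (P *ᵥ v) := hPlow v
    rw [hv1, mul_one] at hp2
    have hh1 : 0 ≤ ‖Y‖ * (u ⬝ᵥ (Ph *ᵥ u)) := mul_nonneg hYpos.le hp1
    have hh2 : ‖Y‖ * σ ≤ ‖Y‖ * (v ⬝ᵥ (P *ᵥ v)) := mul_le_mul_of_nonneg_left hp2 hYpos.le
    nlinarith
  have hbound : u ⬝ᵥ ((Ph * Y + Y * P) *ᵥ v) ≤ 2 * ‖E‖ :=
    le_trans (dot_le_norm _ u v huu hv1) hFnorm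
  have hYle : ‖Y‖ ≤ 2 * ‖E‖ / σ := by
    rw [le_div_iff₀ hσ]
    calc ‖Y‖ * σ = σ * ‖Y‖ := mul_comm _ _
      _ ≤ 2 * ‖E‖ := le_trans hestim hbound
  calc ‖What - W‖ = ‖What * Y‖ := by rw [hWhY]
    _ ≤ ‖What‖ * ‖Y‖ := Matrix.l2_opNorm_mul _ _
    _ ≤ 1 * ‖Y‖ := mul_le_mul_of_nonneg_right (orth_norm_le hWhatorth) (norm_nonneg Y)
    _ = ‖Y‖ := one_mul _
    _ ≤ 2 * ‖E‖ / σ := hYle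
end S7

/-- perturbation bound for orthogonal Procrustes solutions.  If `X₁ᵀX₂` is
invertible and `σ > 0` is a lower bound for its singular values (i.e. `σ‖v‖ ≤ ‖(X₁ᵀX₂)v‖`
for all `v`; the largest such `σ` is `σ_min(X₁ᵀX₂)`), `W` minimizes `‖X₁O − X₂‖_F` over
orthogonal `O`, and `Ŵ` minimizes `‖X̂₁O − X̂₂‖_F` over orthogonal `O`, then
`‖Ŵ − W‖ ≤ 2‖X̂₁ᵀX̂₂ − X₁ᵀX₂‖/σ`. -/
theorem stmt_9 {m d : ℕ} (X1 X2 Xh1 Xh2 : Matrix (Fin m) (Fin d) ℝ)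
    (hinv : IsUnit (X1ᵀ * X2))
    (σ : ℝ) (hσ : 0 < σ)
    (hσmin : ∀ v : Fin d → ℝ,
      σ * Real.sqrt (v ⬝ᵥ v) ≤ Real.sqrt (((X1ᵀ * X2) *ᵥ v) ⬝ᵥ ((X1ᵀ * X2) *ᵥ v)))
    (W : Matrix (Fin d) (Fin d) ℝ) (hWorth : Wᵀ * W = 1)
    (hWmin : ∀ O : Matrix (Fin d) (Fin d) ℝ, Oᵀ * O = 1 →
      frobNorm (X1 * W - X2) ≤ frobNorm (X1 * O - X2))
    (What : Matrix (Fin d) (Fin d) ℝ) (hWhatorth : Whatᵀ * What = 1)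
    (hWhatmin : ∀ O : Matrix (Fin d) (Fin d) ℝ, Oᵀ * O = 1 →
      frobNorm (Xh1 * What - Xh2) ≤ frobNorm (Xh1 * O - Xh2)) :
    specNorm (What - W) ≤ 2 * specNorm (Xh1ᵀ * Xh2 - X1ᵀ * X2) / σ := by
  exact stmt_9' X1 X2 Xh1 Xh2 hinv σ hσ hσmin W hWorth hWmin What hWhatorth hWhatmin
end

section
/- Let (Ω, ℙ) be a probability space and n, d positive integers. For i = 1, 2 let X⁽ⁱ⁾ ∈ ℝ^{n×d} with X⁽ⁱ⁾ᵀX⁽ⁱ⁾ invertible, set P⁽ⁱ⁾ = X⁽ⁱ⁾X⁽ⁱ⁾ᵀ and Π⁽ⁱ⁾ = X⁽ⁱ⁾(X⁽ⁱ⁾ᵀX⁽ⁱ⁾)^{-1}X⁽ⁱ⁾ᵀ. Let E⁽¹⁾, E⁽²⁾ be random symmetric n×n matrices such that the family {E⁽ⁱ⁾_{st} : 1 ≤ s ≤ t ≤ n, i ∈ {1,2}} is mutually independent, with each entry square-integrable, of mean zero, and with Var(E⁽ⁱ⁾_{st}) = P⁽ⁱ⁾_{st}(1 − P⁽ⁱ⁾_{st}).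 For k ∈ {1,…,n} let Ξ^{(k,i)} be the diagonal matrix with Ξ^{(k,i)}_{ℓℓ} = P⁽ⁱ⁾_{kℓ}(1 − P⁽ⁱ⁾_{kℓ}) and define Ψ^{(k)} = Π⁽¹⁾Ξ^{(k,1)}Π⁽¹⁾ + Π⁽²⁾Ξ^{(k,2)}Π⁽²⁾. (a) For k ≠ ℓ, the random variable θ̃ = (E⁽¹⁾Π⁽¹⁾)_{kℓ} + (E⁽¹⁾Π⁽¹⁾)_{ℓk} − (E⁽²⁾Π⁽²⁾)_{kℓ} − (E⁽²⁾Π⁽²⁾)_{ℓk} satisfies 𝔼[θ̃²] = Ψ^{(k)}_{ℓℓ} + Ψ^{(ℓ)}_{kk} + 2Π⁽¹⁾_{kk}Π⁽¹⁾_{ℓℓ}Ξ^{(k,1)}_{ℓℓ} + 2Π⁽²⁾_{kk}Π⁽²⁾_{ℓℓ}Ξ^{(k,2)}_{ℓℓ}. (b) For k = ℓ, the random variable θ̃ = 2(E⁽¹⁾Π⁽¹⁾)_{kk} − 2(E⁽²⁾Π⁽²⁾)_{kk} satisfies 𝔼[θ̃²] = 4Ψ^{(k)}_{kk}. -/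
open Matrix MeasureTheory ProbabilityTheory


lemma lemA_aux {n : ℕ} (g M : Fin n → Fin n → ℝ) (hM : ∀ s t, M s t = M t s) :
    ∑ s : Fin n, ∑ t : Fin n, g s t * M s t
      = ∑ p : {q : Fin n × Fin n // q.1 ≤ q.2},
          (if p.1.1 = p.1.2 then g p.1.1 p.1.1
            else g p.1.1 p.1.2 + g p.1.2 p.1.1) * M p.1.1 p.1.2 := by
  classical
  rw [← Finset.sum_subtype
      (Finset.univ.filter fun q : Fin n × Fin n => q.1 ≤ q.2) (by simp)
      (fun q : Fin n × Fin n =>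
        (if q.1 = q.2 then g q.1 q.1 else g q.1 q.2 + g q.2 q.1) * M q.1 q.2)]
  have hprod : ∑ q : Fin n × Fin n, g q.1 q.2 * M q.1 q.2
      = ∑ s : Fin n, ∑ t : Fin n, g s t * M s t := Fintype.sum_prod_type _
  rw [← hprod]
  rw [← Finset.sum_filter_add_sum_filter_not Finset.univ
      (fun q : Fin n × Fin n => q.1 ≤ q.2)
      (fun q : Fin n × Fin n => g q.1 q.2 * M q.1 q.2)]
  have h2 : ∑ q ∈ Finset.univ.filter (fun q : Fin n × Fin n => ¬ q.1 ≤ q.2),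
      g q.1 q.2 * M q.1 q.2
      = ∑ q ∈ Finset.univ.filter (fun q : Fin n × Fin n => q.1 < q.2),
          g q.2 q.1 * M q.1 q.2 := by
    refine Finset.sum_nbij' Prod.swap Prod.swap ?_ ?_ ?_ ?_ ?_
    · intro a ha; simp only [Finset.mem_filter, Finset.mem_univ, true_and] at ha ⊢
      exact lt_of_not_ge ha
    · intro a ha; simp only [Finset.mem_filter, Finset.mem_univ, true_and] at ha ⊢
      exact not_le_of_gt ha
    · intro a _; simp
    · intro a _; simp
    · intro a _; simp [Prod.swap, hM a.1 a.2]
  have h3 : ∑ q ∈ Finset.univ.filter (fun q : Fin n × Fin n => q.1 < q.2),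
      g q.2 q.1 * M q.1 q.2
      = ∑ q ∈ Finset.univ.filter (fun q : Fin n × Fin n => q.1 ≤ q.2),
          (if q.1 = q.2 then 0 else g q.2 q.1 * M q.1 q.2) := by
    have : Finset.univ.filter (fun q : Fin n × Fin n => q.1 < q.2)
        = (Finset.univ.filter (fun q : Fin n × Fin n => q.1 ≤ q.2)).filter
            (fun q => ¬ q.1 = q.2) := by
      ext q
      simp only [Finset.mem_filter, Finset.mem_univ, true_and, Finset.filter_filter]
      constructor
      · intro h; exact ⟨le_of_lt h, ne_of_lt h⟩
      · rintro ⟨h1, h2⟩; exact lt_of_le_of_ne h1 h2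
    rw [this, Finset.sum_filter]
    exact Finset.sum_congr rfl fun q _ => by split_ifs <;> simp_all
  rw [h2, h3, ← Finset.sum_add_distrib]
  refine Finset.sum_congr rfl fun q hq => ?_
  simp only [Finset.mem_filter, Finset.mem_univ, true_and] at hq
  split_ifs with h
  · rw [h]; ring
  · ring

lemma lemB_aux {Ω : Type*} [MeasureSpace Ω] [IsProbabilityMeasure (ℙ : Measure Ω)]
    {I : Type*} [Fintype I] (Z : I → Ω → ℝ)
    (hind : iIndepFun Z ℙ)
    (hL2 : ∀ p, MemLp (Z p) 2 ℙ) (hmean : ∀ p, ∫ ω, Z p ω ∂ℙ = 0) (c : I → ℝ) :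
    ∫ ω, (∑ p, c p * Z p ω) ^ 2 ∂ℙ = ∑ p, (c p) ^ 2 * variance (Z p) ℙ := by
  classical
  set Y : I → Ω → ℝ := fun p ω => c p * Z p ω with hY
  have hY2 : ∀ p ∈ (Finset.univ : Finset I), MemLp (Y p) 2 ℙ :=
    fun p _ => (hL2 p).const_mul (c p)
  have hpair : Set.Pairwise ↑(Finset.univ : Finset I)
      (fun p q => IndepFun (Y p) (Y q) ℙ) := by
    intro p _ q _ hpq
    exact (hind.indepFun hpq).comp (measurable_const_mul (c p)) (measurable_const_mul (c q))
  have hsum : MemLp (∑ p, Y p) 2 ℙ := memLp_finset_sum' _ hY2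
  have hEsum : (∫ ω, (∑ p, Y p) ω ∂ℙ) = 0 := by
    simp only [Finset.sum_apply]
    rw [integral_finset_sum _ (fun p _ => ((hL2 p).const_mul (c p)).integrable one_le_two)]
    refine Finset.sum_eq_zero fun p _ => ?_
    rw [show (fun ω => Y p ω) = (fun ω => c p * Z p ω) from rfl, integral_const_mul, hmean, mul_zero]
  have key : ∫ ω, (∑ p, c p * Z p ω) ^ 2 ∂ℙ = variance (∑ p, Y p) ℙ := by
    rw [variance_eq_sub hsum]
    have h1 : (∫ ω, ((∑ p, Y p) ^ 2) ω ∂ℙ) = ∫ ω, (∑ p, c p * Z p ω) ^ 2 ∂ℙ := by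
      refine integral_congr_ae (Filter.Eventually.of_forall fun ω => ?_)
      simp [Finset.sum_apply, hY]
    rw [show (ℙ[(∑ p, Y p) ^ 2] : ℝ) = ∫ ω, ((∑ p, Y p) ^ 2) ω ∂ℙ from rfl, h1,
      show (ℙ[∑ p, Y p] : ℝ) = ∫ ω, (∑ p, Y p) ω ∂ℙ from rfl, hEsum]
    ring
  rw [key, IndepFun.variance_sum hY2 hpair]
  exact Finset.sum_congr rfl fun p _ => variance_const_mul (c p) (Z p) ℙ

lemma lemC_aux {Ω : Type*} [MeasureSpace Ω] [IsProbabilityMeasure (ℙ : Measure Ω)]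
    {n : ℕ} (E : Fin 2 → Ω → Matrix (Fin n) (Fin n) ℝ)
    (hsymm : ∀ i ω, (E i ω).IsSymm)
    (hindep : iIndepFun
      (fun (p : Fin 2 × {q : Fin n × Fin n // q.1 ≤ q.2}) ω => E p.1 ω p.2.1.1 p.2.1.2) ℙ)
    (hL2 : ∀ i s t, MemLp (fun ω => E i ω s t) 2 ℙ)
    (hmean : ∀ i s t, (∫ ω, E i ω s t ∂ℙ) = 0)
    (g : Fin 2 → Fin n → Fin n → ℝ) :
    ∫ ω, (∑ i, ∑ s, ∑ t, g i s t * E i ω s t) ^ 2 ∂ℙ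
      = ∑ i, ∑ s, ∑ t,
          (g i s t ^ 2 + g i s t * g i t s - (if s = t then g i s s ^ 2 else 0))
            * variance (fun ω => E i ω s t) ℙ := by
  classical
  set Z : (Fin 2 × {q : Fin n × Fin n // q.1 ≤ q.2}) → Ω → ℝ :=
    fun p ω => E p.1 ω p.2.1.1 p.2.1.2 with hZ
  set c : (Fin 2 × {q : Fin n × Fin n // q.1 ≤ q.2}) → ℝ :=
    fun p => if p.2.1.1 = p.2.1.2 then g p.1 p.2.1.1 p.2.1.1
      else g p.1 p.2.1.1 p.2.1.2 + g p.1 p.2.1.2 p.2.1.1 with hc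
  have step1 : ∀ ω, (∑ i, ∑ s, ∑ t, g i s t * E i ω s t) = ∑ p, c p * Z p ω := by
    intro ω
    rw [Fintype.sum_prod_type]
    refine Finset.sum_congr rfl fun i _ => ?_
    exact lemA_aux (g i) (fun s t => E i ω s t) (fun s t => (hsymm i ω).apply t s)
  have step2 : ∫ ω, (∑ p, c p * Z p ω) ^ 2 ∂ℙ = ∑ p, (c p) ^ 2 * variance (Z p) ℙ :=
    lemB_aux Z hindep (fun p => hL2 p.1 p.2.1.1 p.2.1.2)
      (fun p => hmean p.1 p.2.1.1 p.2.1.2) c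
  have step3 : ∑ p, (c p) ^ 2 * variance (Z p) ℙ
      = ∑ i, ∑ s, ∑ t,
          (g i s t ^ 2 + g i s t * g i t s - (if s = t then g i s s ^ 2 else 0))
            * variance (fun ω => E i ω s t) ℙ := by
    rw [Fintype.sum_prod_type]
    refine Finset.sum_congr rfl fun i _ => ?_
    have hMsymm : ∀ s t : Fin n, variance (fun ω => E i ω s t) ℙ
        = variance (fun ω => E i ω t s) ℙ := by
      intro s t
      congr 1
      funext ω
      exact (hsymm i ω).apply t s
    rw [lemA_aux
      (fun s t => g i s t ^ 2 + g i s t * g i t s - (if s = t then g i s s ^ 2 else 0))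
      (fun s t => variance (fun ω => E i ω s t) ℙ) (fun s t => hMsymm s t)]
    refine Finset.sum_congr rfl fun q _ => ?_
    congr 1
    by_cases h : q.1.1 = q.1.2
    · simp only [hc, h]
      simp only [if_true, eq_self_iff_true, ite_true]
      ring
    · have h' : ¬ q.1.2 = q.1.1 := fun hh => h hh.symm
      simp only [hc, if_neg h, if_neg h']
      ring
  rw [show (fun ω => (∑ i, ∑ s, ∑ t, g i s t * E i ω s t) ^ 2)
      = (fun ω => (∑ p, c p * Z p ω) ^ 2) from funext fun ω => by rw [step1]]
  rw [step2, step3]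

lemma pt_a {n : ℕ} (k ℓ : Fin n) (Pi Eo : Matrix (Fin n) (Fin n) ℝ) :
    (∑ s : Fin n, ∑ t : Fin n,
        ((if s = k then Pi t ℓ else 0) + (if s = ℓ then Pi t k else 0)) * Eo s t)
      = (Eo * Pi) k ℓ + (Eo * Pi) ℓ k := by
  simp only [Matrix.mul_apply, add_mul, ite_mul, zero_mul, Finset.sum_add_distrib,
    Finset.sum_ite_eq', Finset.sum_ite_irrel, Finset.sum_const_zero,
    Finset.mem_univ, if_true]
  congr 1 <;> exact Finset.sum_congr rfl fun t _ => mul_comm _ _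

lemma pt_b {n : ℕ} (k : Fin n) (Pi Eo : Matrix (Fin n) (Fin n) ℝ) :
    (∑ s : Fin n, ∑ t : Fin n, (if s = k then 2 * Pi t k else 0) * Eo s t)
      = 2 * (Eo * Pi) k k := by
  simp only [Matrix.mul_apply, ite_mul, zero_mul, Finset.sum_ite_eq',
    Finset.sum_ite_irrel, Finset.sum_const_zero, Finset.mem_univ, if_true]
  rw [Finset.mul_sum]
  exact Finset.sum_congr rfl fun t _ => by ring

lemma entry_lem {n : ℕ} (Q : Matrix (Fin n) (Fin n) ℝ) (hs : ∀ s t, Q s t = Q t s)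
    (d : Fin n → ℝ) (a : Fin n) :
    (Q * Matrix.diagonal d * Q) a a = ∑ t : Fin n, Q t a * Q t a * d t := by
  rw [Matrix.mul_apply]
  exact Finset.sum_congr rfl fun t _ => by rw [Matrix.mul_diagonal, hs a t]; ring

lemma alg_a {n : ℕ} {k ℓ : Fin n} (hkl : k ≠ ℓ) (Pi : Matrix (Fin n) (Fin n) ℝ)
    (Xi : Fin n → Fin n → ℝ) :
    (∑ s : Fin n, ∑ t : Fin n,
        (((if s = k then Pi t ℓ else 0) + (if s = ℓ then Pi t k else 0)) ^ 2
        + ((if s = k then Pi t ℓ else 0) + (if s = ℓ then Pi t k else 0))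
          * ((if t = k then Pi s ℓ else 0) + (if t = ℓ then Pi s k else 0))
        - (if s = t then ((if s = k then Pi s ℓ else 0) + (if s = ℓ then Pi s k else 0)) ^ 2
            else 0)) * Xi s t)
      = (∑ t : Fin n, Pi t ℓ * Pi t ℓ * Xi k t) + (∑ t : Fin n, Pi t k * Pi t k * Xi ℓ t)
        + Pi k k * Pi ℓ ℓ * Xi k ℓ + Pi k k * Pi ℓ ℓ * Xi ℓ k := by
  have hlk : ℓ ≠ k := hkl.symm
  simp only [pow_two, add_mul, mul_add, sub_mul, ite_mul, mul_ite, mul_zero, zero_mul,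
    zero_add, add_zero, Finset.sum_add_distrib, Finset.sum_sub_distrib,
    Finset.sum_ite_eq, Finset.sum_ite_eq', Finset.sum_ite_irrel, Finset.sum_const_zero, Finset.mem_univ, if_true, hkl, hlk,
    if_false, eq_self_iff_true]
  ring

lemma alg_b {n : ℕ} {k : Fin n} (Pi : Matrix (Fin n) (Fin n) ℝ)
    (Xi : Fin n → Fin n → ℝ) :
    (∑ s : Fin n, ∑ t : Fin n,
        ((if s = k then 2 * Pi t k else 0) ^ 2
        + (if s = k then 2 * Pi t k else 0) * (if t = k then 2 * Pi s k else 0)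
        - (if s = t then (if s = k then 2 * Pi s k else 0) ^ 2 else 0)) * Xi s t)
      = ∑ t : Fin n, 4 * (Pi t k * Pi t k * Xi k t) := by
  simp only [pow_two, add_mul, mul_add, sub_mul, ite_mul, mul_ite, mul_zero, zero_mul,
    zero_add, add_zero, Finset.sum_add_distrib, Finset.sum_sub_distrib,
    Finset.sum_ite_eq, Finset.sum_ite_eq', Finset.sum_ite_irrel, Finset.sum_const_zero,
    Finset.mem_univ, if_true, eq_self_iff_true]
  rw [add_sub_cancel_right]
  exact Finset.sum_congr rfl fun t _ => by ring

/-- exact variance computation for the entrywise noise term of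
`Δ̂ = P̂⁽¹⁾ − P̂⁽²⁾`.  With `Π⁽ⁱ⁾` the projections, `Ξ^{(k,i)}_{ℓℓ} = P⁽ⁱ⁾_{kℓ}(1−P⁽ⁱ⁾_{kℓ})`
and `Ψ^{(k)} = Π⁽¹⁾Ξ^{(k,1)}Π⁽¹⁾ + Π⁽²⁾Ξ^{(k,2)}Π⁽²⁾`:
(a) for `k ≠ ℓ`, `𝔼[((E⁽¹⁾Π⁽¹⁾)_{kℓ}+(E⁽¹⁾Π⁽¹⁾)_{ℓk}−(E⁽²⁾Π⁽²⁾)_{kℓ}−(E⁽²⁾Π⁽²⁾)_{ℓk})²]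
 = Ψ^{(k)}_{ℓℓ} + Ψ^{(ℓ)}_{kk} + 2Π⁽¹⁾_{kk}Π⁽¹⁾_{ℓℓ}Ξ^{(k,1)}_{ℓℓ} + 2Π⁽²⁾_{kk}Π⁽²⁾_{ℓℓ}Ξ^{(k,2)}_{ℓℓ}`;
(b) `𝔼[(2(E⁽¹⁾Π⁽¹⁾)_{kk} − 2(E⁽²⁾Π⁽²⁾)_{kk})²] = 4Ψ^{(k)}_{kk}`. -/
theorem stmt_12 {Ω : Type*} [MeasureSpace Ω] [IsProbabilityMeasure (ℙ : Measure Ω)]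
    {n d : ℕ} (hn : 0 < n) (hd : 0 < d)
    (X1 X2 : Matrix (Fin n) (Fin d) ℝ)
    (h1 : IsUnit (X1ᵀ * X1)) (h2 : IsUnit (X2ᵀ * X2))
    (P1 P2 : Matrix (Fin n) (Fin n) ℝ) (hP1 : P1 = X1 * X1ᵀ) (hP2 : P2 = X2 * X2ᵀ)
    (Pi1 Pi2 : Matrix (Fin n) (Fin n) ℝ)
    (hPi1 : Pi1 = X1 * (X1ᵀ * X1)⁻¹ * X1ᵀ) (hPi2 : Pi2 = X2 * (X2ᵀ * X2)⁻¹ * X2ᵀ)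
    (E1 E2 : Ω → Matrix (Fin n) (Fin n) ℝ)
    (hsymm1 : ∀ ω, (E1 ω).IsSymm) (hsymm2 : ∀ ω, (E2 ω).IsSymm)
    (hindep : iIndepFun
      (fun (p : Fin 2 × {q : Fin n × Fin n // q.1 ≤ q.2}) ω =>
        ![E1, E2] p.1 ω p.2.1.1 p.2.1.2) ℙ)
    (hL2 : ∀ (i : Fin 2) (s t : Fin n), MemLp (fun ω => ![E1, E2] i ω s t) 2 ℙ)
    (hmean : ∀ (i : Fin 2) (s t : Fin n), ∫ ω, ![E1, E2] i ω s t ∂ℙ = 0)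
    (hvar : ∀ (i : Fin 2) (s t : Fin n),
      variance (fun ω => ![E1, E2] i ω s t) ℙ = ![P1, P2] i s t * (1 - ![P1, P2] i s t))
    (Xi : Fin 2 → Fin n → Fin n → ℝ)
    (hXi : ∀ (i : Fin 2) (k ℓ : Fin n), Xi i k ℓ = ![P1, P2] i k ℓ * (1 - ![P1, P2] i k ℓ))
    (Psi : Fin n → Matrix (Fin n) (Fin n) ℝ)
    (hPsi : ∀ k : Fin n, Psi k = Pi1 * Matrix.diagonal (fun ℓ => Xi 0 k ℓ) * Pi1
      + Pi2 * Matrix.diagonal (fun ℓ => Xi 1 k ℓ) * Pi2)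
    (k ℓ : Fin n) :
    (k ≠ ℓ →
      ∫ ω, ((E1 ω * Pi1) k ℓ + (E1 ω * Pi1) ℓ k
              - (E2 ω * Pi2) k ℓ - (E2 ω * Pi2) ℓ k) ^ 2 ∂ℙ
        = Psi k ℓ ℓ + Psi ℓ k k + 2 * Pi1 k k * Pi1 ℓ ℓ * Xi 0 k ℓ
            + 2 * Pi2 k k * Pi2 ℓ ℓ * Xi 1 k ℓ) ∧
    (∫ ω, (2 * (E1 ω * Pi1) k k - 2 * (E2 ω * Pi2) k k) ^ 2 ∂ℙ = 4 * Psi k k k) := by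
  classical
  have hPi1s : ∀ s t, Pi1 s t = Pi1 t s := by
    have h : Pi1.IsSymm := by
      rw [hPi1]
      simp [Matrix.IsSymm, Matrix.transpose_mul, Matrix.transpose_nonsing_inv,
        Matrix.mul_assoc]
    exact fun s t => h.apply t s
  have hPi2s : ∀ s t, Pi2 s t = Pi2 t s := by
    have h : Pi2.IsSymm := by
      rw [hPi2]
      simp [Matrix.IsSymm, Matrix.transpose_mul, Matrix.transpose_nonsing_inv,
        Matrix.mul_assoc]
    exact fun s t => h.apply t s
  have hP1s : ∀ s t, P1 s t = P1 t s := by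
    have h : P1.IsSymm := by rw [hP1]; simp [Matrix.IsSymm, Matrix.transpose_mul]
    exact fun s t => h.apply t s
  have hP2s : ∀ s t, P2 s t = P2 t s := by
    have h : P2.IsSymm := by rw [hP2]; simp [Matrix.IsSymm, Matrix.transpose_mul]
    exact fun s t => h.apply t s
  have hXis : ∀ (i : Fin 2) (s t : Fin n), Xi i s t = Xi i t s := by
    intro i s t
    rw [hXi, hXi]
    have hs : (![P1, P2] : Fin 2 → Matrix (Fin n) (Fin n) ℝ) i s t
        = (![P1, P2] : Fin 2 → Matrix (Fin n) (Fin n) ℝ) i t s := by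
      fin_cases i
      · exact hP1s s t
      · exact hP2s s t
    rw [hs]
  have hsymmE : ∀ (i : Fin 2) (ω : Ω),
      ((![E1, E2] : Fin 2 → Ω → Matrix (Fin n) (Fin n) ℝ) i ω).IsSymm := by
    intro i ω
    fin_cases i
    · exact hsymm1 ω
    · exact hsymm2 ω
  have hvarXi : ∀ (i : Fin 2) (s t : Fin n),
      variance (fun ω => ![E1, E2] i ω s t) ℙ = Xi i s t := by
    intro i s t
    rw [hvar i s t]
    exact (hXi i s t).symm
  constructor
  · -- part (a)
    intro hkl
    set g1 : Fin n → Fin n → ℝ :=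
      fun s t => (if s = k then Pi1 t ℓ else 0) + (if s = ℓ then Pi1 t k else 0) with hg1
    set g2 : Fin n → Fin n → ℝ :=
      fun s t => -((if s = k then Pi2 t ℓ else 0) + (if s = ℓ then Pi2 t k else 0)) with hg2
    set gA : Fin 2 → Fin n → Fin n → ℝ := ![g1, g2] with hgA
    have hint : ∫ ω, ((E1 ω * Pi1) k ℓ + (E1 ω * Pi1) ℓ k
          - (E2 ω * Pi2) k ℓ - (E2 ω * Pi2) ℓ k) ^ 2 ∂ℙ
        = ∫ ω, (∑ i, ∑ s, ∑ t, gA i s t * ![E1, E2] i ω s t) ^ 2 ∂ℙ := by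
      refine integral_congr_ae (Filter.Eventually.of_forall fun ω => ?_)
      dsimp only
      have e1 : (∑ s, ∑ t, gA 0 s t * ![E1, E2] 0 ω s t)
          = (E1 ω * Pi1) k ℓ + (E1 ω * Pi1) ℓ k := by
        simp only [hgA, Matrix.cons_val_zero, hg1]
        exact pt_a k ℓ Pi1 (E1 ω)
      have e2 : (∑ s, ∑ t, gA 1 s t * ![E1, E2] 1 ω s t)
          = -((E2 ω * Pi2) k ℓ + (E2 ω * Pi2) ℓ k) := by
        simp only [hgA, Matrix.cons_val_one, Matrix.cons_val_zero, Matrix.head_cons, hg2, neg_mul,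
          Finset.sum_neg_distrib]
        rw [pt_a k ℓ Pi2 (E2 ω)]
      rw [Fin.sum_univ_two, e1, e2]
      ring
    rw [hint, lemC_aux ![E1, E2] hsymmE hindep hL2 hmean gA]
    have hv : (∑ i, ∑ s, ∑ t,
          (gA i s t ^ 2 + gA i s t * gA i t s - (if s = t then gA i s s ^ 2 else 0))
            * variance (fun ω => ![E1, E2] i ω s t) ℙ)
        = ∑ i, ∑ s, ∑ t,
          (gA i s t ^ 2 + gA i s t * gA i t s - (if s = t then gA i s s ^ 2 else 0))
            * Xi i s t :=
      Finset.sum_congr rfl fun i _ => Finset.sum_congr rfl fun s _ =>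
        Finset.sum_congr rfl fun t _ => by rw [hvarXi i s t]
    rw [hv, Fin.sum_univ_two]
    have n1 : (∑ s, ∑ t,
          (gA 0 s t ^ 2 + gA 0 s t * gA 0 t s - (if s = t then gA 0 s s ^ 2 else 0))
            * Xi 0 s t)
        = (∑ t, Pi1 t ℓ * Pi1 t ℓ * Xi 0 k t) + (∑ t, Pi1 t k * Pi1 t k * Xi 0 ℓ t)
          + Pi1 k k * Pi1 ℓ ℓ * Xi 0 k ℓ + Pi1 k k * Pi1 ℓ ℓ * Xi 0 ℓ k := by
      simp only [hgA, Matrix.cons_val_zero, hg1]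
      exact alg_a hkl Pi1 (Xi 0)
    have n2 : (∑ s, ∑ t,
          (gA 1 s t ^ 2 + gA 1 s t * gA 1 t s - (if s = t then gA 1 s s ^ 2 else 0))
            * Xi 1 s t)
        = (∑ t, Pi2 t ℓ * Pi2 t ℓ * Xi 1 k t) + (∑ t, Pi2 t k * Pi2 t k * Xi 1 ℓ t)
          + Pi2 k k * Pi2 ℓ ℓ * Xi 1 k ℓ + Pi2 k k * Pi2 ℓ ℓ * Xi 1 ℓ k := by
      simp only [hgA, Matrix.cons_val_one, Matrix.cons_val_zero, Matrix.head_cons, hg2]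
      refine Eq.trans ?_ (alg_a hkl Pi2 (Xi 1))
      refine Finset.sum_congr rfl fun s _ => Finset.sum_congr rfl fun t _ => ?_
      split_ifs <;> ring
    rw [n1, n2, hPsi k, hPsi ℓ]
    simp only [Matrix.add_apply]
    rw [entry_lem Pi1 hPi1s (fun t => Xi 0 k t) ℓ, entry_lem Pi2 hPi2s (fun t => Xi 1 k t) ℓ,
      entry_lem Pi1 hPi1s (fun t => Xi 0 ℓ t) k, entry_lem Pi2 hPi2s (fun t => Xi 1 ℓ t) k,
      hXis 0 ℓ k, hXis 1 ℓ k]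
    ring
  · -- part (b)
    set g1 : Fin n → Fin n → ℝ := fun s t => if s = k then 2 * Pi1 t k else 0 with hg1
    set g2 : Fin n → Fin n → ℝ := fun s t => -(if s = k then 2 * Pi2 t k else 0) with hg2
    set gB : Fin 2 → Fin n → Fin n → ℝ := ![g1, g2] with hgB
    have hint : ∫ ω, (2 * (E1 ω * Pi1) k k - 2 * (E2 ω * Pi2) k k) ^ 2 ∂ℙ
        = ∫ ω, (∑ i, ∑ s, ∑ t, gB i s t * ![E1, E2] i ω s t) ^ 2 ∂ℙ := by
      refine integral_congr_ae (Filter.Eventually.of_forall fun ω => ?_)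
      dsimp only
      have e1 : (∑ s, ∑ t, gB 0 s t * ![E1, E2] 0 ω s t) = 2 * (E1 ω * Pi1) k k := by
        simp only [hgB, Matrix.cons_val_zero, hg1]
        exact pt_b k Pi1 (E1 ω)
      have e2 : (∑ s, ∑ t, gB 1 s t * ![E1, E2] 1 ω s t) = -(2 * (E2 ω * Pi2) k k) := by
        simp only [hgB, Matrix.cons_val_one, Matrix.cons_val_zero, Matrix.head_cons, hg2, neg_mul,
          Finset.sum_neg_distrib]
        rw [pt_b k Pi2 (E2 ω)]
      rw [Fin.sum_univ_two, e1, e2]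
      ring
    rw [hint, lemC_aux ![E1, E2] hsymmE hindep hL2 hmean gB]
    have hv : (∑ i, ∑ s, ∑ t,
          (gB i s t ^ 2 + gB i s t * gB i t s - (if s = t then gB i s s ^ 2 else 0))
            * variance (fun ω => ![E1, E2] i ω s t) ℙ)
        = ∑ i, ∑ s, ∑ t,
          (gB i s t ^ 2 + gB i s t * gB i t s - (if s = t then gB i s s ^ 2 else 0))
            * Xi i s t :=
      Finset.sum_congr rfl fun i _ => Finset.sum_congr rfl fun s _ =>
        Finset.sum_congr rfl fun t _ => by rw [hvarXi i s t]
    rw [hv, Fin.sum_univ_two]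
    have n1 : (∑ s, ∑ t,
          (gB 0 s t ^ 2 + gB 0 s t * gB 0 t s - (if s = t then gB 0 s s ^ 2 else 0))
            * Xi 0 s t)
        = ∑ t, 4 * (Pi1 t k * Pi1 t k * Xi 0 k t) := by
      simp only [hgB, Matrix.cons_val_zero, hg1]
      exact alg_b Pi1 (Xi 0)
    have n2 : (∑ s, ∑ t,
          (gB 1 s t ^ 2 + gB 1 s t * gB 1 t s - (if s = t then gB 1 s s ^ 2 else 0))
            * Xi 1 s t)
        = ∑ t, 4 * (Pi2 t k * Pi2 t k * Xi 1 k t) := by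
      simp only [hgB, Matrix.cons_val_one, Matrix.cons_val_zero, Matrix.head_cons, hg2]
      refine Eq.trans ?_ (alg_b Pi2 (Xi 1))
      refine Finset.sum_congr rfl fun s _ => Finset.sum_congr rfl fun t _ => ?_
      split_ifs <;> ring
    rw [n1, n2, hPsi k]
    simp only [Matrix.add_apply]
    rw [entry_lem Pi1 hPi1s (fun t => Xi 0 k t) k, entry_lem Pi2 hPi2s (fun t => Xi 1 k t) k,
      mul_add, Finset.mul_sum, Finset.mul_sum]
end

section
/- Let n, d be positive integers and let X⁽¹⁾, X⁽²⁾, X̂⁽¹⁾, X̂⁽²⁾, E⁽¹⁾, E⁽²⁾, Y, R⁽¹⁾, R⁽²⁾ be real matrices of compatible sizes (X⁽ⁱ⁾, X̂⁽ⁱ⁾, Y, R⁽ⁱ⁾ ∈ ℝ^{n×d}; E⁽ⁱ⁾ ∈ ℝ^{n×n}) with X⁽ⁱ⁾ᵀX⁽ⁱ⁾ invertible for i = 1, 2. Let W⁽¹⁾ ∈ O_d, and let W⁽²⁾, W^{(1,2)}, Ŵ^{(1,2)} ∈ ℝ^{d×d} be arbitrary. Assume: (i) X⁽²⁾ = X⁽¹⁾W^{(1,2)}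 + Y; and (ii) X̂⁽ⁱ⁾W⁽ⁱ⁾ − X⁽ⁱ⁾ = E⁽ⁱ⁾X⁽ⁱ⁾(X⁽ⁱ⁾ᵀX⁽ⁱ⁾)^{-1} + R⁽ⁱ⁾ for i = 1, 2. Define Ŷ = X̂⁽²⁾ − X̂⁽¹⁾Ŵ^{(1,2)} and R = R⁽²⁾ − R⁽¹⁾W^{(1,2)} − (X̂⁽¹⁾W⁽¹⁾)(W⁽¹⁾ᵀŴ^{(1,2)}W⁽²⁾ − W^{(1,2)}). Then ŶW⁽²⁾ = Y + E⁽²⁾X⁽²⁾(X⁽²⁾ᵀX⁽²⁾)^{-1} − E⁽¹⁾X⁽¹⁾(X⁽¹⁾ᵀX⁽¹⁾)^{-1}W^{(1,2)} + R. -/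
open Matrix

/-- exact algebraic decomposition of the estimated shift matrix.
Given `X⁽²⁾ = X⁽¹⁾W^{(1,2)} + Y` and the first-order expansions
`X̂⁽ⁱ⁾W⁽ⁱ⁾ − X⁽ⁱ⁾ = E⁽ⁱ⁾X⁽ⁱ⁾(X⁽ⁱ⁾ᵀX⁽ⁱ⁾)⁻¹ + R⁽ⁱ⁾`, the matrix
`Ŷ = X̂⁽²⁾ − X̂⁽¹⁾Ŵ^{(1,2)}` satisfies
`ŶW⁽²⁾ = Y + E⁽²⁾X⁽²⁾(X⁽²⁾ᵀX⁽²⁾)⁻¹ − E⁽¹⁾X⁽¹⁾(X⁽¹⁾ᵀX⁽¹⁾)⁻¹W^{(1,2)} + R` with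
`R = R⁽²⁾ − R⁽¹⁾W^{(1,2)} − (X̂⁽¹⁾W⁽¹⁾)(W⁽¹⁾ᵀŴ^{(1,2)}W⁽²⁾ − W^{(1,2)})`. -/
theorem stmt_13 {n d : ℕ}
    (X1 X2 Xh1 Xh2 Y R1 R2 : Matrix (Fin n) (Fin d) ℝ)
    (E1 E2 : Matrix (Fin n) (Fin n) ℝ)
    (hinv1 : IsUnit (X1ᵀ * X1)) (hinv2 : IsUnit (X2ᵀ * X2))
    (W1 : Matrix (Fin d) (Fin d) ℝ) (hW1 : W1ᵀ * W1 = 1) (hW1' : W1 * W1ᵀ = 1)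
    (W2 W12 What12 : Matrix (Fin d) (Fin d) ℝ)
    (hmodel : X2 = X1 * W12 + Y)
    (hexp1 : Xh1 * W1 - X1 = E1 * X1 * (X1ᵀ * X1)⁻¹ + R1)
    (hexp2 : Xh2 * W2 - X2 = E2 * X2 * (X2ᵀ * X2)⁻¹ + R2)
    (Yhat : Matrix (Fin n) (Fin d) ℝ) (hYhat : Yhat = Xh2 - Xh1 * What12) :
    Yhat * W2 =
      Y + E2 * X2 * (X2ᵀ * X2)⁻¹ - E1 * X1 * (X1ᵀ * X1)⁻¹ * W12
        + (R2 - R1 * W12 - (Xh1 * W1) * (W1ᵀ * What12 * W2 - W12)) := by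
  have h1 : Xh1 * W1 = X1 + (E1 * X1 * (X1ᵀ * X1)⁻¹ + R1) := by
    have := hexp1; linear_combination (norm := noncomm_ring) this
  have h2 : Xh2 * W2 = X2 + (E2 * X2 * (X2ᵀ * X2)⁻¹ + R2) := by
    linear_combination (norm := noncomm_ring) hexp2
  have hX : Xh1 * What12 * W2 = (Xh1 * W1) * (W1ᵀ * What12 * W2) := by
    rw [Matrix.mul_assoc Xh1 W1, ← Matrix.mul_assoc W1, ← Matrix.mul_assoc W1, hW1',
      Matrix.one_mul, Matrix.mul_assoc]
  subst hYhat hmodel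
  rw [Matrix.sub_mul, hX, h2, h1]
  simp only [Matrix.add_mul, Matrix.mul_add, Matrix.sub_mul, Matrix.mul_sub, smul_add,
    smul_sub, Matrix.mul_smul, Matrix.smul_mul, neg_smul, one_smul, neg_add_rev]
  abel
end
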